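/- arXiv:1709.10509 — 4 statements merged into one kernel-verified Lean document; each statement's English description precedes it below -/
import Mathlib

section
/- With the notation of the ellipse-inclusion setup: if (t, s) satisfies ((β/3 + δ/2 − t)/(β/3))² + (s/Λ)² ≤ 1, then δ/2 ≤ t < (11/12)β and |s| ≤ Λ·√(6/β)·√t. -/
theorem ellipse_param_bounds (β δ Λ t s : ℝ)
    (hβ : 0 < β) (hδ0 : 0 < δ) (hδβ : δ < β / 2) (hΛ : 0 < Λ)
    (h : ((β / 3 + δ / 2 - t) / (β / 3)) ^ 2 + (s / Λ) ^ 2 ≤ 1) :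
    δ / 2 ≤ t ∧ t < 11 / 12 * β ∧ |s| ≤ Λ * Real.sqrt (6 / β) * Real.sqrt t := by
  have hA : (0:ℝ) < β / 3 := by linarith
  have hΛ2 : (0:ℝ) < Λ ^ 2 := by positivity
  have h' : (β / 3 + δ / 2 - t) ^ 2 / (β / 3) ^ 2 + s ^ 2 / Λ ^ 2 ≤ 1 := by
    rw [← div_pow, ← div_pow]; exact h
  rw [div_add_div _ _ (by positivity) (by positivity), div_le_one (by positivity)] at h'
  have hkey : (β / 3 + δ / 2 - t) ^ 2 * Λ ^ 2 + s ^ 2 * (β / 3) ^ 2 ≤ (β / 3) ^ 2 * Λ ^ 2 := by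
    linarith [h']
  have hx : (β / 3 + δ / 2 - t) ^ 2 ≤ (β / 3) ^ 2 := by
    refine le_of_mul_le_mul_right ?_ hΛ2
    nlinarith [mul_nonneg (sq_nonneg s) (sq_nonneg (β / 3))]
  have ht1 : δ / 2 ≤ t := by nlinarith [hx, hA, sq_nonneg (δ / 2 - t)]
  have ht2 : t < 11 / 12 * β := by
    nlinarith [hx, hA, sq_nonneg (β / 3 + δ / 2 - t + β / 3)]
  refine ⟨ht1, ht2, ?_⟩
  have hs2 : s ^ 2 ≤ Λ ^ 2 * (6 / β) * t := by
    have e : Λ ^ 2 * (6 / β) * t = Λ ^ 2 * 6 * t / β := by ring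
    rw [e, le_div_iff₀ hβ]
    nlinarith [hkey, mul_nonneg hΛ2.le (sq_nonneg (t - δ / 2)),
      mul_pos hΛ2 (mul_pos hβ hδ0), hβ]
  have ht0 : 0 ≤ t := by linarith
  have hrhs : 0 ≤ Λ * Real.sqrt (6 / β) * Real.sqrt t := by positivity
  have hsq : (Λ * Real.sqrt (6 / β) * Real.sqrt t) ^ 2 = Λ ^ 2 * (6 / β) * t := by
    rw [mul_pow, mul_pow, Real.sq_sqrt (by positivity), Real.sq_sqrt ht0]
  calc |s| = Real.sqrt (s ^ 2) := (Real.sqrt_sq_eq_abs s).symm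
    _ ≤ Real.sqrt ((Λ * Real.sqrt (6 / β) * Real.sqrt t) ^ 2) := by
        rw [hsq]; exact Real.sqrt_le_sqrt hs2
    _ = Λ * Real.sqrt (6 / β) * Real.sqrt t := Real.sqrt_sq hrhs
end

section
/- Let f(x) = (1 − x^α)^{1/α} with 1 < α < 2. Then for 0 < x < 2^{−1/α}: x^α/α ≤ 1 − f(x) ≤ 2^{1 − 1/α} · x^α/α. -/
/-!
Put `t = x ^ α ∈ (0, 1/2)`, so that `f x = (1 - t) ^ (1/α)`. Bernoulli's inequality
`1 - t ≤ (1 - t/α) ^ α` gives the lower bound. For the upper bound, the tangent line of the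
convex function `s ↦ s ^ α` at `v = f x` lies below its graph at `s = 1`, which gives
`1 - v ≤ v ^ (1 - α) * (t/α)`; since `v ^ α = 1 - t ≥ 1/2`, the factor `v ^ (1 - α)` is at most
`2 ^ (1 - 1/α)`.
-/

namespace Real

theorem one_sub_rpow_one_div_le_one_sub_div {p t : ℝ} (hp : 1 ≤ p) (ht : t ≤ 1) :
    (1 - t) ^ (1 / p) ≤ 1 - t / p := by
  have hp0 : 0 < p := by linarith
  have htp : t / p ≤ 1 := (div_le_one hp0).2 (by linarith)
  have bernoulli : 1 - t ≤ (1 - t / p) ^ p := by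
    have h := one_add_mul_self_le_rpow_one_add (s := -(t / p)) (by linarith) hp
    rwa [mul_neg, mul_div_cancel₀ _ hp0.ne', ← sub_eq_add_neg, ← sub_eq_add_neg] at h
  rwa [one_div, rpow_inv_le_iff_of_pos (by linarith) (by linarith) hp0]

theorem mul_rpow_sub_one_mul_one_sub_le_one_sub_rpow {p v : ℝ} (hp : 1 ≤ p) (hv : 0 < v) :
    p * v ^ (p - 1) * (1 - v) ≤ 1 - v ^ p := by
  have hvp : 0 < v ^ p := rpow_pos_of_pos hv p
  have bernoulli : 1 + p * (1 / v - 1) ≤ (v ^ p)⁻¹ := by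
    simpa [one_div, inv_rpow hv.le] using
      one_add_mul_self_le_rpow_one_add (s := 1 / v - 1) (by simp [hv.le]) hp
  have key : (1 + p * (1 / v - 1)) * v ^ p ≤ 1 := by
    simpa [hvp.ne'] using mul_le_mul_of_nonneg_right bernoulli hvp.le
  rw [rpow_sub_one hv.ne']
  field_simp at key ⊢
  nlinarith

theorem one_sub_one_sub_rpow_one_div_le {p t : ℝ} (hp : 1 ≤ p) (ht : t < 1) :
    1 - (1 - t) ^ (1 / p) ≤ (1 - t) ^ (1 / p - 1) * (t / p) := by
  have hp0 : 0 < p := by linarith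
  set v := (1 - t) ^ (1 / p) with hv
  have hv0 : 0 < v := rpow_pos_of_pos (by linarith) _
  have hvp : v ^ p = 1 - t := by
    rw [hv, ← rpow_mul (by linarith), one_div_mul_cancel hp0.ne', rpow_one]
  have hpow : (1 - t) ^ (1 / p - 1) = (v ^ (p - 1))⁻¹ := by
    rw [hv, ← rpow_mul (by linarith), ← rpow_neg (by linarith)]
    congr 1
    field_simp
    ring
  have tangent := mul_rpow_sub_one_mul_one_sub_le_one_sub_rpow hp hv0
  rw [hvp, sub_sub_cancel] at tangent
  rw [hpow, ← div_eq_inv_mul, le_div_iff₀ (rpow_pos_of_pos hv0 _), le_div_iff₀ hp0]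
  linarith

end Real

open Real in
theorem one_sub_f_bounds_general (α : ℝ) (hα1 : 1 < α)
    (f : ℝ → ℝ) (hf : f = fun x => (1 - x ^ α) ^ (1 / α)) :
    ∀ x ∈ Set.Ioo (0 : ℝ) ((2 : ℝ) ^ (-1 / α)),
      x ^ α / α ≤ 1 - f x ∧ 1 - f x ≤ (2 : ℝ) ^ (1 - 1 / α) * (x ^ α / α) := by
  rintro x ⟨hx0, hx⟩
  subst hf
  have hα0 : 0 < α := by linarith
  have ht : x ^ α < 2⁻¹ := by
    rwa [neg_div, rpow_neg zero_le_two, ← inv_rpow zero_le_two, one_div,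
      lt_rpow_inv_iff_of_pos hx0.le (by norm_num) hα0] at hx
  refine ⟨?_, ?_⟩
  · linarith [one_sub_rpow_one_div_le_one_sub_div hα1.le (t := x ^ α) (by linarith)]
  · calc 1 - (1 - x ^ α) ^ (1 / α)
        ≤ (1 - x ^ α) ^ (1 / α - 1) * (x ^ α / α) :=
          one_sub_one_sub_rpow_one_div_le hα1.le (by linarith)
      _ ≤ (2⁻¹) ^ (1 / α - 1) * (x ^ α / α) := by
          have hexp : 1 / α - 1 ≤ 0 := sub_nonpos.2 ((div_le_one hα0).2 hα1.le)
          gcongr ?_ * _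
          exact rpow_le_rpow_of_nonpos (by norm_num) (by linarith) hexp
      _ = 2 ^ (1 - 1 / α) * (x ^ α / α) := by
          rw [inv_rpow zero_le_two, ← rpow_neg zero_le_two, neg_sub]

theorem one_sub_f_bounds (α : ℝ) (hα1 : 1 < α) (hα2 : α < 2)
    (f : ℝ → ℝ) (hf : f = fun x => (1 - x ^ α) ^ (1 / α)) :
    ∀ x ∈ Set.Ioo (0 : ℝ) ((2 : ℝ) ^ (-1 / α)),
      x ^ α / α ≤ 1 - f x ∧ 1 - f x ≤ (2 : ℝ) ^ (1 - 1 / α) * (x ^ α / α) :=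
  one_sub_f_bounds_general α hα1 f hf
end

section
/- Let f(x) = (1 − x^α)^{1/α}, 1 < α < 2, 0 < x₀ ≤ 2^{−1/α}, t > 0, and x₁ = x₀ + t·f'(x₀)/√(1 + f'(x₀)²). Then 0 ≤ x₀ − x₁ ≤ √2 · t · x₀^{α−1}. -/
theorem x1_bounds (α : ℝ) (hα1 : 1 < α) (hα2 : α < 2)
    (x₀ t : ℝ) (hx₀ : 0 < x₀) (hx₀' : x₀ ≤ (2 : ℝ) ^ (-1 / α)) (ht : 0 < t)
    (d x₁ : ℝ)
    (hd : d = -(x₀ ^ (α - 1) * (1 - x₀ ^ α) ^ (1 / α - 1)))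
    (hx₁ : x₁ = x₀ + t * d / Real.sqrt (1 + d ^ 2)) :
    0 ≤ x₀ - x₁ ∧ x₀ - x₁ ≤ Real.sqrt 2 * t * x₀ ^ (α - 1) := by
  have hαpos : (0:ℝ) < α := by linarith
  have hxα : x₀ ^ α ≤ 1/2 := by
    calc x₀ ^ α ≤ ((2:ℝ) ^ (-1/α)) ^ α :=
          Real.rpow_le_rpow hx₀.le hx₀' hαpos.le
      _ = (2:ℝ) ^ ((-1/α) * α) := by
          rw [← Real.rpow_mul (by norm_num)]
      _ = (2:ℝ) ^ (-1:ℝ) := by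
          congr 1; field_simp
      _ = 1/2 := by
          rw [Real.rpow_neg_one]; norm_num
  have h1x : (1:ℝ)/2 ≤ 1 - x₀ ^ α := by linarith
  have h1xpos : (0:ℝ) < 1 - x₀ ^ α := by linarith
  have hx1pow : 0 < x₀ ^ (α - 1) := Real.rpow_pos_of_pos hx₀ _
  have hBpos : 0 < (1 - x₀ ^ α) ^ (1 / α - 1) := Real.rpow_pos_of_pos h1xpos _
  have hdneg : d < 0 := by
    rw [hd]; nlinarith
  have hs1 : (1:ℝ) ≤ Real.sqrt (1 + d ^ 2) := by
    have h := Real.sqrt_le_sqrt (show (1:ℝ) ≤ 1 + d ^ 2 by nlinarith)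
    simpa using h
  have hspos : 0 < Real.sqrt (1 + d ^ 2) := lt_of_lt_of_le one_pos hs1
  have hdiff : x₀ - x₁ = t * (-d) / Real.sqrt (1 + d ^ 2) := by
    rw [hx₁]; ring
  have hnn : 0 ≤ x₀ - x₁ := by
    rw [hdiff]
    exact div_nonneg (mul_nonneg ht.le (by linarith)) (Real.sqrt_nonneg _)
  refine ⟨hnn, ?_⟩
  have hle1 : x₀ - x₁ ≤ t * (-d) := by
    rw [hdiff]
    exact div_le_self (mul_nonneg ht.le (by linarith)) hs1
  -- bound -d
  have hexp : 1 / α - 1 ≤ 0 := by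
    have : 1 / α ≤ 1 := by
      rw [div_le_one hαpos]; linarith
    linarith
  have hB : (1 - x₀ ^ α) ^ (1 / α - 1) ≤ Real.sqrt 2 := by
    calc (1 - x₀ ^ α) ^ (1 / α - 1) ≤ ((1:ℝ)/2) ^ (1 / α - 1) :=
          Real.rpow_le_rpow_of_nonpos (by norm_num) h1x hexp
      _ = (2:ℝ) ^ (1 - 1/α) := by
          rw [one_div, Real.inv_rpow (by norm_num), ← Real.rpow_neg (by norm_num)]
          ring_nf
      _ ≤ (2:ℝ) ^ ((1:ℝ)/2) := by
          apply Real.rpow_le_rpow_of_exponent_le one_le_two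
          have : (1:ℝ)/2 ≤ 1/α := by
            rw [div_le_div_iff₀ (by norm_num) hαpos]; linarith
          linarith
      _ = Real.sqrt 2 := (Real.sqrt_eq_rpow 2).symm
  have : -d ≤ Real.sqrt 2 * x₀ ^ (α - 1) := by
    rw [hd, neg_neg, mul_comm]
    exact mul_le_mul_of_nonneg_right hB hx1pow.le
  calc x₀ - x₁ ≤ t * (-d) := hle1
    _ ≤ t * (Real.sqrt 2 * x₀ ^ (α - 1)) := by
        exact mul_le_mul_of_nonneg_left this ht.le
    _ = Real.sqrt 2 * t * x₀ ^ (α - 1) := by ring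
end

section
/- Let f(x) = (1 − x^α)^{1/α}, 1 < α < 2, and fix c₂(α) > 0. There exist constants c₀(α), c', c'' > 0 such that if 0 < x₀ ≤ ((2−α)/(1+α))^{1/α}/2, t ≥ c₂(α) x₀^α, t ≤ c₀(α), and x̃ > 0 is the point with f(x̃) = f(x₀) − t√(1 + f'(x₀)²), then c' t^{1/α} ≤ x̃ ≤ c'' t^{1/α}. -/
/-!
Write `u = x̃ ^ α`. For `0 ≤ u ≤ 1` the profile `(1 - u) ^ (1/α)` lies between `1 - u` and
`1 - u/α` (the latter is Bernoulli's inequality). For `x₀ ≤ 1/2` the slope satisfies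
`|f'(x₀)| ≤ 2`, so the shift `t √(1 + f'(x₀)²)` lies between `t` and `3t`. Inserting these bounds
into `f(x̃) = f(x₀) - t √(1 + f'(x₀)²)` gives `t ≤ u ≤ α (x₀ ^ α + 3t)`, and `x₀ ^ α ≤ t / c₂`
makes the right side a multiple of `t`. That `x̃ ≤ 1` must itself be derived: for `x̃ > 1` the
`rpow` of the negative base `1 - x̃ ^ α` is `exp (…) * cos (π / α)`, which is negative since
`1 < α < 2`, whereas the right side is nonnegative once `t ≤ 1/6`.
-/

open Real

namespace Real

lemma rpow_lt_zero_of_neg {x y : ℝ} (hx : x < 0) (hy₁ : 1 / 2 < y) (hy₂ : y < 3 / 2) :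
    x ^ y < 0 := by
  rw [rpow_def_of_neg hx]
  have := pi_pos
  exact mul_neg_of_pos_of_neg (exp_pos _)
    (cos_neg_of_pi_div_two_lt_of_lt (by nlinarith) (by nlinarith))

end Real

section Profile

variable {α x : ℝ}

lemma le_one_of_one_sub_rpow_rpow_nonneg (hα₁ : 1 < α) (hα₂ : α < 2)
    (h : 0 ≤ (1 - x ^ α) ^ (1 / α)) : x ≤ 1 := by
  by_contra! hx₁
  have hxα : 1 < x ^ α := one_lt_rpow hx₁ (by linarith)
  have hy₁ : 1 / 2 < 1 / α := by rw [div_lt_div_iff₀ two_pos (by linarith)]; linarith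
  have hy₂ : 1 / α < 3 / 2 := by rw [div_lt_div_iff₀ (by linarith) two_pos]; linarith
  exact (rpow_lt_zero_of_neg (by linarith) hy₁ hy₂).not_ge h

lemma one_sub_rpow_le_rpow_one_div (hα : 1 ≤ α) (hx₀ : 0 ≤ x) (hx₁ : x ≤ 1) :
    1 - x ^ α ≤ (1 - x ^ α) ^ (1 / α) :=
  self_le_rpow_of_le_one (by linarith [rpow_le_one hx₀ hx₁ (by linarith : 0 ≤ α)])
    (by linarith [rpow_nonneg hx₀ α]) (by rw [div_le_one (by linarith)]; exact hα)

lemma one_sub_rpow_rpow_le_one_sub_div (hα : 1 ≤ α) (hx₀ : 0 ≤ x) (hx₁ : x ≤ 1) :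
    (1 - x ^ α) ^ (1 / α) ≤ 1 - x ^ α / α := by
  have hα₀ : 0 < α := by linarith
  have := rpow_one_add_le_one_add_mul_self (s := -x ^ α) (p := 1 / α)
    (by linarith [rpow_le_one hx₀ hx₁ hα₀.le]) (by positivity)
    (by rw [div_le_one hα₀]; exact hα)
  rw [← sub_eq_add_neg] at this
  linarith [show 1 / α * -x ^ α = -(x ^ α / α) by ring]

lemma rpow_sub_one_mul_mem_Icc (hα : 1 < α) (hx₀ : 0 ≤ x) (hx : x ≤ 1 / 2) :
    x ^ (α - 1) * (1 - x ^ α) ^ (1 / α - 1) ∈ Set.Icc 0 2 := by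
  have hα₀ : 0 < α := by linarith
  have hxα : x ^ α ≤ 1 / 2 := (rpow_le_self_of_le_one hx₀ (by linarith) hα.le).trans hx
  have h₁ : x ^ (α - 1) ≤ 1 := rpow_le_one hx₀ (by linarith) (by linarith)
  have h₂ : (1 - x ^ α) ^ (1 / α - 1) ≤ 2 :=
    calc (1 - x ^ α) ^ (1 / α - 1)
        ≤ (1 / 2 : ℝ) ^ (1 / α - 1) :=
          rpow_le_rpow_of_nonpos (by norm_num) (by linarith)
            (by rw [sub_nonpos, div_le_one hα₀]; exact hα.le)
      _ ≤ (1 / 2 : ℝ) ^ (-1 : ℝ) :=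
          rpow_le_rpow_of_exponent_ge (by norm_num) (by norm_num) (by linarith [one_div_pos.2 hα₀])
      _ = 2 := by norm_num
  have h₂₀ : 0 ≤ (1 - x ^ α) ^ (1 / α - 1) := rpow_nonneg (by linarith) _
  exact ⟨by positivity, by nlinarith [rpow_nonneg hx₀ (α - 1)]⟩

lemma rpow_mem_Icc_of_eq_sub_mul {x₀ s t : ℝ} (hα₁ : 1 < α) (hα₂ : α < 2) (hx : 0 ≤ x)
    (hx₀ : 0 ≤ x₀) (hx₀' : x₀ ≤ 1 / 2) (hs₁ : 1 ≤ s) (hs₃ : s ≤ 3) (ht₀ : 0 ≤ t) (ht : t ≤ 1 / 6)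
    (h : (1 - x ^ α) ^ (1 / α) = (1 - x₀ ^ α) ^ (1 / α) - t * s) :
    x ^ α ∈ Set.Icc t (α * (x₀ ^ α + 3 * t)) := by
  have hx₀α : x₀ ^ α ≤ 1 / 2 := (rpow_le_self_of_le_one hx₀ (by linarith) hα₁.le).trans hx₀'
  have hfx₀ := one_sub_rpow_le_rpow_one_div hα₁.le hx₀ (by linarith)
  have hfx₀' : (1 - x₀ ^ α) ^ (1 / α) ≤ 1 :=
    rpow_le_one (by linarith [rpow_nonneg hx₀ α]) (by linarith [rpow_nonneg hx₀ α])
      (by positivity)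
  have hx₁ : x ≤ 1 := le_one_of_one_sub_rpow_rpow_nonneg hα₁ hα₂ (by nlinarith)
  have hlow := one_sub_rpow_le_rpow_one_div hα₁.le hx hx₁
  have hup := one_sub_rpow_rpow_le_one_sub_div hα₁.le hx hx₁
  refine ⟨by nlinarith, ?_⟩
  have : x ^ α / α ≤ x₀ ^ α + 3 * t := by nlinarith
  rwa [div_le_iff₀ (by linarith), mul_comm] at this

end Profile

theorem xtilde_bounds (α : ℝ) (hα1 : 1 < α) (hα2 : α < 2)
    (c₂ : ℝ) (hc₂ : 0 < c₂) :
    ∃ c₀ c' c'' : ℝ, 0 < c₀ ∧ 0 < c' ∧ 0 < c'' ∧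
      ∀ x₀ t xt : ℝ,
        0 < x₀ → x₀ ≤ ((2 - α) / (1 + α)) ^ (1 / α) / 2 →
        c₂ * x₀ ^ α ≤ t → t ≤ c₀ →
        ∀ f : ℝ → ℝ, ∀ d : ℝ,
          f = (fun x => (1 - |x| ^ α) ^ (1 / α)) →
          d = -(x₀ ^ (α - 1) * (1 - x₀ ^ α) ^ (1 / α - 1)) →
          0 < xt → f xt = f x₀ - t * Real.sqrt (1 + d ^ 2) →
          c' * t ^ (1 / α) ≤ xt ∧ xt ≤ c'' * t ^ (1 / α) := by
  have hα₀ : 0 < α := by linarith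
  refine ⟨1 / 6, 1, (α * (1 / c₂ + 3)) ^ (1 / α), by norm_num, one_pos, by positivity, ?_⟩
  rintro x₀ t xt hx₀ hx₀le hc₂t ht f d rfl rfl hxt hlevel
  have hx₀half : x₀ ≤ 1 / 2 := by
    have : ((2 - α) / (1 + α)) ^ (1 / α) ≤ 1 :=
      rpow_le_one (div_nonneg (by linarith) (by linarith))
        ((div_le_one (by linarith)).2 (by linarith)) (by positivity)
    linarith
  have ht₀ : 0 < t := (by positivity : 0 < c₂ * x₀ ^ α).trans_le hc₂t
  obtain ⟨hslope₀, hslope⟩ := rpow_sub_one_mul_mem_Icc hα1 hx₀.le hx₀half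
  simp only [abs_of_pos hxt, abs_of_pos hx₀, neg_sq] at hlevel
  obtain ⟨hlow, hup⟩ := rpow_mem_Icc_of_eq_sub_mul hα1 hα2 hxt.le hx₀.le hx₀half
    (one_le_sqrt.2 (by nlinarith)) ((sqrt_le_left (by norm_num)).2 (by nlinarith)) ht₀.le ht
    hlevel
  have hx₀t : x₀ ^ α ≤ t / c₂ := by rw [le_div_iff₀ hc₂]; linarith
  rw [one_mul, ← mul_rpow (by positivity) ht₀.le, one_div]
  constructor
  · exact (rpow_inv_le_iff_of_pos ht₀.le hxt.le hα₀).2 hlow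
  · refine (le_rpow_inv_iff_of_pos hxt.le (by positivity) hα₀).2 (hup.trans ?_)
    calc α * (x₀ ^ α + 3 * t) ≤ α * (t / c₂ + 3 * t) := by gcongr
      _ = α * (1 / c₂ + 3) * t := by ring
end
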